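/- Let G be a graph with lists L of size ⌈M/2⌉ + 1 (with Δ(G) ≤ M), let u be a vertex of degree 1 with neighbor v, and let c be a linear L-coloring of G − u. Then the number of colors in L(u) that equal c(v) or appear on at least two neighbors of v is at most ⌊(M−1)/2⌋ + 1, so at least one color of L(u) remains available and c extends to a linear L-coloring of G. -/

import Mathlib

open SimpleGraph Finset

/-- The subgraph of `G` induced by the union of the two color classes `a` and `b`
of the coloring `c` (as a spanning subgraph of `G`). -/
def pairGraph {V α : Type*} (G : SimpleGraph V) (c : V → α) (a b : α) : SimpleGraph V where
  Adj x y := G.Adj x y ∧ (c x = a ∨ c x = b) ∧ (c y = a ∨ c y = b)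
  symm := ⟨fun x y h => ⟨h.1.symm, h.2.2, h.2.1⟩⟩
  loopless := ⟨fun x h => G.irrefl h.1⟩

/-- A graph has maximum degree at most two:  no vertex has three distinct neighbors. -/
def MaxDegLE2 {V : Type*} (H : SimpleGraph V) : Prop :=
  ∀ v x y z : V, H.Adj v x → H.Adj v y → H.Adj v z → x = y ∨ x = z ∨ y = z

/-- `c` is a linear coloring of `G`: a proper coloring in which the union of any
two color classes induces a linear forest (an acyclic graph of maximum degree at most two,
i.e. a disjoint union of paths). -/
def IsLinearColoring {V α : Type*} (G : SimpleGraph V) (c : V → α) : Prop :=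
  (∀ ⦃x y⦄, G.Adj x y → c x ≠ c y) ∧
  ∀ a b : α, (pairGraph G c a b).IsAcyclic ∧ MaxDegLE2 (pairGraph G c a b)

/-- The linear chromatic number `lc(G)`. -/
noncomputable def linChromNum {V : Type*} (G : SimpleGraph V) : ℕ :=
  sInf {n : ℕ | ∃ c : V → Fin n, IsLinearColoring G c}

/-- `G` is linearly `k`-choosable: from any lists of size at least `k` one can choose
a linear coloring. -/
def LinChoosable {V : Type*} (G : SimpleGraph V) (k : ℕ) : Prop :=
  ∀ L : V → Finset ℕ, (∀ v, k ≤ (L v).card) →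
    ∃ c : V → ℕ, (∀ v, c v ∈ L v) ∧ IsLinearColoring G c

/-- The linear list chromatic number `lc_ℓ(G)`. -/
noncomputable def linListChromNum {V : Type*} (G : SimpleGraph V) : ℕ :=
  sInf {k : ℕ | LinChoosable G k}

/-- `mad(G) ≤ q`: every nonempty subgraph has average degree at most `q`. -/
def MadLE {V : Type*} [Fintype V] (G : SimpleGraph V) (q : ℚ) : Prop :=
  ∀ H : G.Subgraph, H.verts.Nonempty →
    2 * (H.edgeSet.ncard : ℚ) ≤ q * (H.verts.ncard : ℚ)

/-- `mad(G) < q`: every nonempty subgraph has average degree less than `q`. -/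
def MadLT {V : Type*} [Fintype V] (G : SimpleGraph V) (q : ℚ) : Prop :=
  ∀ H : G.Subgraph, H.verts.Nonempty →
    2 * (H.edgeSet.ncard : ℚ) < q * (H.verts.ncard : ℚ)

/-- `mad(G) ≥ q`: some nonempty subgraph has average degree at least `q`. -/
def MadGE {V : Type*} [Fintype V] (G : SimpleGraph V) (q : ℚ) : Prop :=
  ∃ H : G.Subgraph, H.verts.Nonempty ∧ q * (H.verts.ncard : ℚ) ≤ 2 * (H.edgeSet.ncard : ℚ)

/-- `mad(G) = q`: the maximum average degree over nonempty subgraphs equals `q`. -/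
def MadEq {V : Type*} [Fintype V] (G : SimpleGraph V) (q : ℚ) : Prop :=
  MadLE G q ∧ ∃ H : G.Subgraph, H.verts.Nonempty ∧
    2 * (H.edgeSet.ncard : ℚ) = q * (H.verts.ncard : ℚ)

/-- `H` is a minor of `G`. -/
def IsMinorOf {W V : Type*} (H : SimpleGraph W) (G : SimpleGraph V) : Prop :=
  ∃ f : V → Option W,
    (∀ w : W, ∃ v : V, f v = some w) ∧
    (∀ w : W, (G.induce {v | f v = some w}).Connected) ∧
    (∀ w₁ w₂ : W, H.Adj w₁ w₂ →
      ∃ v₁ v₂ : V, f v₁ = some w₁ ∧ f v₂ = some w₂ ∧ G.Adj v₁ v₂)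

/-- Planarity, via Wagner's theorem: no `K₅` minor and no `K_{3,3}` minor. -/
def IsPlanar {V : Type*} (G : SimpleGraph V) : Prop :=
  ¬ IsMinorOf (⊤ : SimpleGraph (Fin 5)) G ∧
  ¬ IsMinorOf (completeBipartiteGraph (Fin 3) (Fin 3)) G

/-!
A leaf `u` with neighbor `v` lies on no cycle, and in the subgraph spanned by two color classes
it can only raise the degree of `v`. Hence a color `a` is safe for `u` as soon as `a ≠ c v` and
`a` occurs at most once on `N(v) \ {u}`. Since each color occurring twice there uses up two of
the at most `M - 1` vertices of `N(v) \ {u}`, at most `(M - 1) / 2 + 1 < |L u|` colors are blocked.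
-/

namespace SimpleGraph

variable {V : Type*} {H : SimpleGraph V} {u : V}

theorem IsAcyclic.of_induce_ne (hu : (H.neighborSet u).Subsingleton)
    (h : (H.induce {x | x ≠ u}).IsAcyclic) : H.IsAcyclic := by
  classical
  intro w W hW
  by_cases hmem : u ∈ W.support
  · have hC := hW.rotate hmem
    exact hC.snd_ne_penultimate <|
      hu (Walk.adj_snd hC.not_nil) (Walk.adj_penultimate hC.not_nil).symm
  · have hS : ∀ x ∈ W.support, x ∈ {x | x ≠ u} := fun x hx hxu => hmem (hxu ▸ hx)
    refine h (W.induce _ hS) ?_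
    rwa [← Walk.isCycle_map_iff_of_injective (f := (Embedding.induce _).toHom)
      Subtype.val_injective, Walk.map_induce]

theorem maxDegLE2_of_induce_ne (hu : (H.neighborSet u).Subsingleton)
    (hnbr : ∀ w, H.Adj w u → (H.neighborSet w \ {u}).Subsingleton)
    (h : MaxDegLE2 (H.induce {x | x ≠ u})) : MaxDegLE2 H := by
  intro w x y z hx hy hz
  by_cases hw : w = u
  · subst hw
    exact Or.inl (hu hx hy)
  by_cases hxyz : x ≠ u ∧ y ≠ u ∧ z ≠ u
  · simpa only [Subtype.ext_iff] using
      h ⟨w, hw⟩ ⟨x, hxyz.1⟩ ⟨y, hxyz.2.1⟩ ⟨z, hxyz.2.2⟩ hx hy hz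
  · have hwu : H.Adj w u := by grind
    have hwnbr : ∀ a b, H.Adj w a → a ≠ u → H.Adj w b → b ≠ u → a = b :=
      fun a b ha hau hb hbu => hnbr w hwu ⟨ha, hau⟩ ⟨hb, hbu⟩
    grind

end SimpleGraph

section Coloring

variable {V α : Type*} [DecidableEq V] {G : SimpleGraph V} {u v : V} {c : V → α} {a : α}

theorem pairGraph_update_induce_ne (p q : α) :
    (pairGraph G (Function.update c u a) p q).induce {x | x ≠ u} =
      pairGraph (G.induce {x | x ≠ u}) (fun x => c x.1) p q := by
  ext ⟨x, hx⟩ ⟨y, hy⟩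
  simp [pairGraph, Function.update_of_ne hx, Function.update_of_ne hy]

theorem IsLinearColoring.update_of_neighborSet_subset
    (hc : IsLinearColoring (G.induce {x | x ≠ u}) fun x => c x.1)
    (hu : G.neighborSet u ⊆ {v}) (hav : a ≠ c v)
    (ha : {x | G.Adj v x ∧ x ≠ u ∧ c x = a}.Subsingleton) :
    IsLinearColoring G (Function.update c u a) := by
  have hleaf : ∀ y, G.Adj u y → y = v ∧ y ≠ u := fun y hy => ⟨hu hy, (G.ne_of_adj hy).symm⟩
  have hproper : ∀ ⦃x y⦄, G.Adj x y → Function.update c u a x ≠ Function.update c u a y := by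
    intro x y hxy
    rcases eq_or_ne x u with rfl | hx
    · obtain ⟨rfl, hy⟩ := hleaf y hxy
      simpa [Function.update_of_ne hy] using hav
    rcases eq_or_ne y u with rfl | hy
    · obtain ⟨rfl, hx⟩ := hleaf x hxy.symm
      simpa [Function.update_of_ne hx] using hav.symm
    · simpa [Function.update_of_ne hx, Function.update_of_ne hy] using
        hc.1 (x := ⟨x, hx⟩) (y := ⟨y, hy⟩) hxy
  refine ⟨hproper, fun p q => ?_⟩
  have hsub : ((pairGraph G (Function.update c u a) p q).neighborSet u).Subsingleton :=
    Set.subsingleton_singleton.anti fun y hy => hu hy.1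
  obtain ⟨hacyc, hdeg⟩ := hc.2 p q
  rw [← pairGraph_update_induce_ne] at hacyc hdeg
  refine ⟨hacyc.of_induce_ne hsub, maxDegLE2_of_induce_ne hsub ?_ hdeg⟩
  rintro w ⟨hwu, hw, hua⟩ y ⟨⟨hwy, -, hy⟩, hyu⟩ z ⟨⟨hwz, -, hz⟩, hzu⟩
  obtain ⟨rfl, hwu'⟩ := hleaf w hwu.symm
  simp only [Function.update_self, Function.update_of_ne hwu'] at hw hua
  simp only [Set.mem_singleton_iff] at hyu hzu
  simp only [Function.update_of_ne hyu, Function.update_of_ne hzu] at hy hz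
  -- in the colors `p, q`, any neighbor of `w` other than `u` must have the color of `u`
  have hcy : c y = a := by grind [hc.1 (x := ⟨w, hwu'⟩) (y := ⟨y, hyu⟩) hwy]
  have hcz : c z = a := by grind [hc.1 (x := ⟨w, hwu'⟩) (y := ⟨z, hzu⟩) hwz]
  exact ha ⟨hwy, hyu, hcy⟩ ⟨hwz, hzu, hcz⟩

end Coloring

theorem Finset.two_mul_card_filter_two_le_card_fiber_le {ι α : Type*} [DecidableEq α]
    (s : Finset ι) (f : ι → α) (t : Finset α) :
    2 * #{a ∈ t | 2 ≤ #{x ∈ s | f x = a}} ≤ #s :=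
  calc 2 * #{a ∈ t | 2 ≤ #{x ∈ s | f x = a}}
      ≤ ∑ a ∈ t with 2 ≤ #{x ∈ s | f x = a}, #{x ∈ s | f x = a} := by
        rw [mul_comm, ← smul_eq_mul, ← sum_const]
        exact sum_le_sum fun a ha => (mem_filter.1 ha).2
    _ = #{x ∈ s | f x ∈ {a ∈ t | 2 ≤ #{x ∈ s | f x = a}}} :=
        sum_card_fiberwise_eq_card_filter _ _ _
    _ ≤ #s := card_filter_le _ _

section LeafBlockedColors

variable {V α : Type*} [DecidableEq V] [DecidableEq α] (G : SimpleGraph V) [G.LocallyFinite]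
  (c : V → α) (u v : V) (A : Finset α)

def leafBlockedColors : Finset α :=
  {a ∈ A | a = c v ∨ 2 ≤ #{x ∈ G.neighborFinset v | x ≠ u ∧ c x = a}}

variable {G c u v A}

theorem card_leafBlockedColors_le (huv : G.Adj u v) :
    #(leafBlockedColors G c u v A) ≤ (G.degree v - 1) / 2 + 1 := by
  have hN : #{x ∈ G.neighborFinset v | x ≠ u} = G.degree v - 1 := by
    rw [filter_ne', card_erase_of_mem (by simpa using huv.symm), card_neighborFinset_eq_degree]
  have hrep := two_mul_card_filter_two_le_card_fiber_le {x ∈ G.neighborFinset v | x ≠ u} c A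
  simp only [filter_filter] at hrep
  calc #(leafBlockedColors G c u v A)
      ≤ #(insert (c v) {a ∈ A | 2 ≤ #{x ∈ G.neighborFinset v | x ≠ u ∧ c x = a}}) :=
        card_le_card fun a => by simp only [leafBlockedColors, mem_filter, mem_insert]; tauto
    _ ≤ _ := card_insert_le _ _
    _ ≤ (G.degree v - 1) / 2 + 1 := by omega

theorem ne_and_subsingleton_of_notMem_leafBlockedColors {a : α} (haA : a ∈ A)
    (ha : a ∉ leafBlockedColors G c u v A) :
    a ≠ c v ∧ {x | G.Adj v x ∧ x ≠ u ∧ c x = a}.Subsingleton := by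
  simp only [leafBlockedColors, mem_filter, haA, true_and, not_or, not_le] at ha
  refine ⟨ha.1, fun x hx y hy => card_le_one.1 (Nat.le_of_lt_succ ha.2) x ?_ y ?_⟩ <;>
    simpa using ‹_›

end LeafBlockedColors

/-- Let `G` have lists of size `⌈M/2⌉ + 1` with `Δ(G) ≤ M`, let `u` be a vertex of degree `1`
with neighbor `v`, and let `c` be a linear `L`-coloring of `G − u`.  Then at most
`⌊(M−1)/2⌋ + 1` colors of `L(u)` equal `c(v)` or appear at least twice among the neighbors
of `v`, and `c` extends to a linear `L`-coloring of `G`. -/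
theorem extend_linear_coloring_at_leaf {V : Type*} [Fintype V] [DecidableEq V]
    (G : SimpleGraph V) [DecidableRel G.Adj] (M : ℕ) (L : V → Finset ℕ)
    (hL : ∀ x, (L x).card = (M + 1) / 2 + 1) (hΔ : G.maxDegree ≤ M)
    (u v : V) (hu : G.degree u = 1) (huv : G.Adj u v)
    (c : V → ℕ)
    (hc : IsLinearColoring (G.induce {x | x ≠ u}) fun x => c x.1)
    (hcL : ∀ x, x ≠ u → c x ∈ L x) :
    ((L u).filter fun a => a = c v ∨
        2 ≤ ((G.neighborFinset v).filter fun x => x ≠ u ∧ c x = a).card).card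
      ≤ (M - 1) / 2 + 1 ∧
    ∃ c' : V → ℕ, (∀ x, x ≠ u → c' x = c x) ∧ (∀ x, c' x ∈ L x) ∧
      IsLinearColoring G c' := by
  have hM : 1 ≤ M := hu ▸ (G.degree_le_maxDegree u).trans hΔ
  have hblocked : #(leafBlockedColors G c u v (L u)) ≤ (M - 1) / 2 + 1 := by
    have := (G.degree_le_maxDegree v).trans hΔ
    have := card_leafBlockedColors_le (c := c) (A := L u) huv
    omega
  refine ⟨hblocked, ?_⟩
  obtain ⟨a, haL, ha⟩ := exists_mem_notMem_of_card_lt_card (hblocked.trans_lt (by rw [hL u]; omega))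
  obtain ⟨hav, hsingle⟩ := ne_and_subsingleton_of_notMem_leafBlockedColors haL ha
  have hleaf : G.neighborSet u ⊆ {v} := fun y hy => by
    obtain ⟨w, -, hw⟩ := degree_eq_one_iff_existsUnique_adj.1 hu
    exact (hw y hy).trans (hw v huv).symm
  refine ⟨Function.update c u a, fun x hx => Function.update_of_ne hx _ _, fun x => ?_,
    hc.update_of_neighborSet_subset hleaf hav hsingle⟩
  rcases eq_or_ne x u with rfl | hx
  · simpa using haL
  · simpa [Function.update_of_ne hx] using hcL x hx
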